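/- Let B(0,c) ⊂ ℂⁿ be the open ball of radius c and ψ(z) = −log(c² − |z|²). Then the Kähler metric g on B(0,c) with Kähler form (i/2π)∂∂̄ψ (up to the normalization constant) satisfies the Ohsawa condition: ∂ψ is bounded in the L∞ norm with respect to g. -/

import Mathlib

noncomputable section

variable (n : ℕ)

/-- The potential `ψ(z) = -log(c² - |z|²)` on the ball `B(0,c) ⊆ ℂⁿ`. -/
def psi (c : ℝ) : EuclideanSpace ℂ (Fin n) → ℝ :=
  fun z => -Real.log (c ^ 2 - ‖z‖ ^ 2)

/-- The real Hessian of a function `f : ℂⁿ → ℝ`. -/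
def Hess (f : EuclideanSpace ℂ (Fin n) → ℝ) (z : EuclideanSpace ℂ (Fin n)) :
    EuclideanSpace ℂ (Fin n) →L[ℝ] EuclideanSpace ℂ (Fin n) →L[ℝ] ℝ :=
  fderiv ℝ (fun w => fderiv ℝ f w) z

/-- The `(1,1)`-form `(i/2π)∂∂̄f` expressed through the real Hessian. -/
def omegaOf (f : EuclideanSpace ℂ (Fin n) → ℝ) (z : EuclideanSpace ℂ (Fin n))
    (v w : EuclideanSpace ℂ (Fin n)) : ℝ :=
  (1 / (2 * Real.pi)) * ((1 / 2) *
    (Hess n f z w (Complex.I • v) - Hess n f z v (Complex.I • w)))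

/-- The Kähler metric associated with the Kähler form `ω`: `g(v,w) = ω(v,Jw)`. -/
def metricOf (f : EuclideanSpace ℂ (Fin n) → ℝ) (z : EuclideanSpace ℂ (Fin n))
    (v w : EuclideanSpace ℂ (Fin n)) : ℝ :=
  omegaOf n f z v (Complex.I • w)

/-- The `(1,0)`-part of the differential: `∂f(v) = ½(df(v) - i·df(iv))`. -/
def paDiff (f : EuclideanSpace ℂ (Fin n) → ℝ) (z v : EuclideanSpace ℂ (Fin n)) : ℂ :=
  (1 / 2 : ℂ) * ((fderiv ℝ f z v : ℝ) - Complex.I * ((fderiv ℝ f z (Complex.I • v) : ℝ) : ℂ))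


/-! The potential is radial, so `dψ_z = (2/t) ⟪z, ·⟫` and
`Hess ψ_z (w, u) = (2/t) ⟪w, u⟫ + (4/t²) ⟪z, w⟫ ⟪z, u⟫` with `t = c² - ‖z‖²`.
Hence `∂ψ_z(v) = ⟪z, v⟫_ℂ / t`, while `π g_z(v, v) = ‖v‖²/t + |⟪z, v⟫_ℂ|²/t²` contains
`|∂ψ_z(v)|²` as one of its two summands, so `|∂ψ|_g ≤ √π`. -/

open Real InnerProductSpace

lemma sq_sub_norm_sq_pos {E : Type*} [SeminormedAddGroup E] {c : ℝ} {z : E} (hz : ‖z‖ < c) :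
    0 < c ^ 2 - ‖z‖ ^ 2 :=
  sub_pos.2 (pow_lt_pow_left₀ hz (norm_nonneg z) two_ne_zero)

section Potential

variable {F : Type*} [NormedAddCommGroup F] [InnerProductSpace ℝ F] {c : ℝ} {z : F}

lemma hasFDerivAt_sq_sub_norm_sq (c : ℝ) (z : F) :
    HasFDerivAt (fun w : F => c ^ 2 - ‖w‖ ^ 2) (-(2 • innerSL ℝ z)) z :=
  (hasStrictFDerivAt_norm_sq z).hasFDerivAt.const_sub _

lemma hasFDerivAt_neg_log_sq_sub_norm_sq (hz : ‖z‖ < c) :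
    HasFDerivAt (fun w : F => -log (c ^ 2 - ‖w‖ ^ 2))
      ((2 / (c ^ 2 - ‖z‖ ^ 2)) • innerSL ℝ z) z := by
  have ht := sq_sub_norm_sq_pos hz
  refine ((hasDerivAt_log ht.ne').comp_hasFDerivAt z (hasFDerivAt_sq_sub_norm_sq c z)).neg
    |>.congr_fderiv ?_
  ext v
  simp only [neg_apply, smul_apply, smul_eq_mul, nsmul_eq_mul, Nat.cast_ofNat,
    innerSL_apply_apply]
  field_simp

lemma hasFDerivAt_two_div_sq_sub_norm_sq (hz : ‖z‖ < c) :
    HasFDerivAt (fun w : F => 2 / (c ^ 2 - ‖w‖ ^ 2))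
      ((4 / (c ^ 2 - ‖z‖ ^ 2) ^ 2) • innerSL ℝ z) z := by
  have ht := sq_sub_norm_sq_pos hz
  have h := ((hasDerivAt_inv ht.ne').const_mul 2).comp_hasFDerivAt z
    (hasFDerivAt_sq_sub_norm_sq c z)
  simp only [← div_eq_mul_inv] at h
  refine h.congr_fderiv ?_
  ext v
  simp only [smul_apply, neg_apply, smul_eq_mul, nsmul_eq_mul, Nat.cast_ofNat,
    innerSL_apply_apply]
  field_simp
  ring

lemma fderiv_fderiv_neg_log_sq_sub_norm_sq_apply (hz : ‖z‖ < c) (w u : F) :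
    fderiv ℝ (fderiv ℝ fun x : F => -log (c ^ 2 - ‖x‖ ^ 2)) z w u =
      2 / (c ^ 2 - ‖z‖ ^ 2) * ⟪w, u⟫_ℝ +
        4 / (c ^ 2 - ‖z‖ ^ 2) ^ 2 * (⟪z, w⟫_ℝ * ⟪z, u⟫_ℝ) := by
  have hderiv : (fderiv ℝ fun x : F => -log (c ^ 2 - ‖x‖ ^ 2)) =ᶠ[nhds z]
      fun x => (2 / (c ^ 2 - ‖x‖ ^ 2)) • innerSL ℝ x := by
    filter_upwards [Metric.isOpen_ball.mem_nhds (mem_ball_zero_iff.2 hz)] with x hx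
    exact (hasFDerivAt_neg_log_sq_sub_norm_sq (mem_ball_zero_iff.1 hx)).fderiv
  have hsecond : HasFDerivAt (fun x => (2 / (c ^ 2 - ‖x‖ ^ 2)) • innerSL ℝ x) _ z :=
    (hasFDerivAt_two_div_sq_sub_norm_sq hz).smul (innerSL ℝ (E := F)).hasFDerivAt
  rw [hderiv.fderiv_eq, hsecond.fderiv]
  simp only [add_apply, smul_apply, ContinuousLinearMap.smulRight_apply, smul_eq_mul]
  rw [innerSL_apply_apply, innerSL_apply_apply, innerSL_apply_apply]
  ring

end Potential

section KaehlerMetric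

variable {n : ℕ} {f : EuclideanSpace ℂ (Fin n) → ℝ} {z : EuclideanSpace ℂ (Fin n)}

/- Mathlib's `real_inner_eq_re_inner` does not apply here: the real inner product on
`EuclideanSpace ℂ ι` is the `PiLp` one, not the one induced by the complex structure. -/
lemma EuclideanSpace.real_inner_eq_re_inner {ι : Type*} [Fintype ι] (x y : EuclideanSpace ℂ ι) :
    ⟪x, y⟫_ℝ = (⟪x, y⟫_ℂ).re := by
  simp [PiLp.inner_apply, Complex.inner]

lemma EuclideanSpace.real_inner_I_smul_right {ι : Type*} [Fintype ι] (x y : EuclideanSpace ℂ ι) :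
    ⟪x, Complex.I • y⟫_ℝ = -(⟪x, y⟫_ℂ).im := by
  simp [EuclideanSpace.real_inner_eq_re_inner]

lemma paDiff_eq_of_fderiv_eq {r : ℝ} (hf : fderiv ℝ f z = r • innerSL ℝ z)
    (v : EuclideanSpace ℂ (Fin n)) : paDiff n f z v = ((r / 2 : ℝ) : ℂ) * ⟪z, v⟫_ℂ := by
  simp only [paDiff, hf, smul_apply, innerSL_apply_apply, smul_eq_mul,
    EuclideanSpace.real_inner_eq_re_inner]
  apply Complex.ext <;> simp <;> ring

lemma metricOf_self_eq_of_hess_eq {α β : ℝ}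
    (hH : ∀ w u, Hess n f z w u = α * ⟪w, u⟫_ℝ + β * (⟪z, w⟫_ℝ * ⟪z, u⟫_ℝ))
    (v : EuclideanSpace ℂ (Fin n)) :
    metricOf n f z v v = (2 * α * ‖v‖ ^ 2 + β * ‖⟪z, v⟫_ℂ‖ ^ 2) / (4 * π) := by
  have hJJ : Complex.I • Complex.I • v = -v := by rw [smul_smul, Complex.I_mul_I, neg_one_smul]
  have hJ : ‖Complex.I • v‖ = ‖v‖ := by rw [norm_smul, Complex.norm_I, one_mul]
  rw [metricOf, omegaOf, hJJ, map_neg, hH, hH, real_inner_self_eq_norm_sq,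
    real_inner_self_eq_norm_sq, hJ, EuclideanSpace.real_inner_I_smul_right,
    EuclideanSpace.real_inner_eq_re_inner, Complex.sq_norm, Complex.normSq_apply]
  field_simp
  ring

end KaehlerMetric

theorem psi_metric_ohsawa (c : ℝ) :
    ∃ C : ℝ, ∀ z ∈ Metric.ball (0 : EuclideanSpace ℂ (Fin n)) c,
      ∀ v : EuclideanSpace ℂ (Fin n),
        ‖paDiff n (psi n c) z v‖ ≤
          C * Real.sqrt (metricOf n (psi n c) z v v) := by
  refine ⟨√π, fun z hz v => ?_⟩
  replace hz : ‖z‖ < c := mem_ball_zero_iff.mp hz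
  have ht := sq_sub_norm_sq_pos hz
  set t := c ^ 2 - ‖z‖ ^ 2
  set a := ⟪z, v⟫_ℂ
  have hdψ : paDiff n (psi n c) z v = ((2 / t / 2 : ℝ) : ℂ) * a :=
    paDiff_eq_of_fderiv_eq (hasFDerivAt_neg_log_sq_sub_norm_sq hz).fderiv v
  have hg : metricOf n (psi n c) z v v =
      (2 * (2 / t) * ‖v‖ ^ 2 + 4 / t ^ 2 * ‖a‖ ^ 2) / (4 * π) :=
    metricOf_self_eq_of_hess_eq (fderiv_fderiv_neg_log_sq_sub_norm_sq_apply hz) v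
  have hπg : π * metricOf n (psi n c) z v v = ‖v‖ ^ 2 / t + (‖a‖ / t) ^ 2 := by
    rw [hg]; field_simp; ring
  rw [← sqrt_mul pi_pos.le, hπg, hdψ, norm_mul, Complex.norm_real, norm_of_nonneg (by positivity),
    show 2 / t / 2 * ‖a‖ = ‖a‖ / t by ring]
  apply le_sqrt_of_sq_le
  have : 0 ≤ ‖v‖ ^ 2 / t := by positivity
  linarith
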